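/- arXiv:2302.11601 — 2 statements merged into one kernel-verified Lean document; each statement's English description precedes it below -/
import Mathlib

section
/- Let r > 0, let θ : ℝ → ℝ be Lipschitz continuous with Lipschitz constant 1/r, let P_θ = θ(0) ∈ [π/2, π], let P_y ∈ ℝ, and set o_y = P_y − r·cos(P_θ). Then for every s ∈ [0, r·(P_θ − π/2)], P_y + ∫₀^{s} sin(θ(t)) dt ≤ o_y + r·cos(P_θ − s/r). -/
/-!
Since `θ` is `1/r`-Lipschitz, `θ t ≥ θ 0 - t / r` for `t ≥ 0`, and as long as the extremal heading
`θ 0 - t / r` has not dropped below `π / 2`, both headings lie in `[π / 2, 3π / 2]`, where `sin` is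
decreasing. So `sin (θ t) ≤ sin (θ 0 - t / r)` pointwise; integrating, the right-hand side becomes
the height gained along the circular arc of radius `r`.
-/

open Real

lemma LipschitzWith.abs_sub_le_div {θ : ℝ → ℝ} {r : ℝ} (hr : 0 ≤ r)
    (hθ : LipschitzWith (Real.toNNReal (1 / r)) θ) (x y : ℝ) :
    |θ x - θ y| ≤ |x - y| / r := by
  have h := hθ.dist_le_mul x y
  rw [Real.coe_toNNReal _ (by positivity), Real.dist_eq, Real.dist_eq] at h
  rwa [one_div_mul_eq_div] at h

lemma Real.sin_le_sin_of_pi_div_two_le {a x : ℝ} (ha : π / 2 ≤ a) (hax : a ≤ x)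
    (hx : x ≤ 3 * π / 2) : sin x ≤ sin a := by
  rw [← cos_sub_pi_div_two x, ← cos_sub_pi_div_two a]
  exact cos_le_cos_of_nonneg_of_le_pi (by linarith) (by linarith) (by linarith)

lemma integral_sin_sub_div {r : ℝ} (hr : r ≠ 0) (c a b : ℝ) :
    ∫ t in a..b, sin (c - t / r) = r * cos (c - b / r) - r * cos (c - a / r) := by
  rw [intervalIntegral.integral_comp_sub_div (fun x => sin x) hr, integral_sin, smul_eq_mul]
  ring

theorem stmt_6 (r : ℝ) (hr : 0 < r) (θ : ℝ → ℝ)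
    (hθ : LipschitzWith (Real.toNNReal (1 / r)) θ)
    (hPθ : θ 0 ∈ Set.Icc (Real.pi / 2) Real.pi)
    (P_y : ℝ) :
    ∀ s ∈ Set.Icc (0 : ℝ) (r * (θ 0 - Real.pi / 2)),
      P_y + (∫ t in (0:ℝ)..s, Real.sin (θ t)) ≤
        (P_y - r * Real.cos (θ 0)) + r * Real.cos (θ 0 - s / r) := by
  rintro s ⟨hs0, hs⟩
  have hsr : s / r ≤ θ 0 - π / 2 := (div_le_iff₀' hr).2 hs
  have hpointwise : ∀ t ∈ Set.Icc 0 s, sin (θ t) ≤ sin (θ 0 - t / r) := by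
    rintro t ⟨ht0, hts⟩
    have hdev := hθ.abs_sub_le_div hr.le t 0
    rw [sub_zero, abs_of_nonneg ht0] at hdev
    have htr : t / r ≤ s / r := div_le_div_of_nonneg_right hts hr.le
    exact sin_le_sin_of_pi_div_two_le (by linarith) (by linarith [(abs_le.mp hdev).1])
      (by linarith [(abs_le.mp hdev).2, hPθ.2])
  have hcont : Continuous fun t => sin (θ 0 - t / r) := by fun_prop
  calc P_y + ∫ t in (0:ℝ)..s, sin (θ t)
      ≤ P_y + ∫ t in (0:ℝ)..s, sin (θ 0 - t / r) := by
        gcongr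
        exact intervalIntegral.integral_mono_on hs0
          ((continuous_sin.comp hθ.continuous).intervalIntegrable _ _)
          (hcont.intervalIntegrable _ _) hpointwise
    _ = (P_y - r * cos (θ 0)) + r * cos (θ 0 - s / r) := by
        rw [integral_sin_sub_div hr.ne', zero_div, sub_zero]
        ring
end

section
/- Let r > 0, let S = {π/2 + 2πk : k ∈ ℤ}, and let θ : ℝ → ℝ be Lipschitz continuous with Lipschitz constant 1/r. Let δ = infDist(θ(0), S). Then for every s_f ≥ r·δ, ∫₀^{s_f} sin(θ(t)) dt ≤ r·sin δ + (s_f − r·δ). -/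
open Real

/-- The set of "straight up" headings `π/2 + 2πk`, `k ∈ ℤ`. -/
def upSet : Set ℝ := {x : ℝ | ∃ k : ℤ, x = Real.pi / 2 + 2 * Real.pi * k}

/-!
Since `x ↦ infDist x upSet` is 1-Lipschitz, a heading that turns at rate at most `1/r` is still at
distance at least `δ - t/r` from `upSet` at time `t`. As `sin x = cos (x - y)` for `y ∈ upSet`, every
point lies within `π` of `upSet`, and `cos` decreases on `[0, π]`, this gives `sin (θ t) ≤ cos (δ - t/r)` for `t ≤ rδ`, whose integral is
`r sin δ`; after time `rδ` one only uses `sin ≤ 1`.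
-/

open Metric

lemma sin_eq_cos_sub_of_mem_upSet {x y : ℝ} (hy : y ∈ upSet) : sin x = cos (x - y) := by
  obtain ⟨k, rfl⟩ := hy
  rw [show x - (π / 2 + 2 * π * k) = x - π / 2 - k * (2 * π) by ring, cos_sub_int_mul_two_pi,
    cos_sub_pi_div_two]

lemma exists_mem_upSet_abs_sub_le_pi (x : ℝ) : ∃ y ∈ upSet, |x - y| ≤ π := by
  have h2π : (0 : ℝ) < 2 * π := by positivity
  refine ⟨π / 2 + 2 * π * toIocDiv h2π (-π) (x - π / 2), ⟨_, rfl⟩, ?_⟩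
  obtain ⟨hlo, hhi⟩ := toIocMod_mem_Ioc h2π (-π) (x - π / 2)
  rw [toIocMod, zsmul_eq_mul] at hlo hhi
  rw [abs_le]
  constructor <;> linarith

lemma sin_le_cos_of_le_infDist_upSet {x d : ℝ} (hd₀ : 0 ≤ d) (hd : d ≤ infDist x upSet) :
    sin x ≤ cos d := by
  obtain ⟨y, hy, hxy⟩ := exists_mem_upSet_abs_sub_le_pi x
  have hdy : d ≤ |x - y| := hd.trans (by simpa [Real.dist_eq] using infDist_le_dist_of_mem hy)
  rw [sin_eq_cos_sub_of_mem_upSet hy, ← cos_abs]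
  exact cos_le_cos_of_nonneg_of_le_pi hd₀ hxy hdy

lemma LipschitzWith.sin_le_cos_infDist_upSet_sub_mul {K : NNReal} {θ : ℝ → ℝ}
    (hθ : LipschitzWith K θ) {t : ℝ} (ht : 0 ≤ t) (hKt : K * t ≤ infDist (θ 0) upSet) :
    sin (θ t) ≤ cos (infDist (θ 0) upSet - K * t) := by
  refine sin_le_cos_of_le_infDist_upSet (sub_nonneg.2 hKt) ?_
  have hdist : dist (θ 0) (θ t) ≤ K * t := by
    simpa [Real.dist_eq, abs_of_nonneg ht] using hθ.dist_le_mul 0 t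
  linarith [infDist_le_infDist_add_dist (x := θ 0) (y := θ t) (s := upSet)]

lemma integral_cos_sub_inv_mul {r : ℝ} (hr : r ≠ 0) (δ : ℝ) :
    ∫ t in (0 : ℝ)..r * δ, cos (δ - r⁻¹ * t) = r * sin δ := by
  rw [intervalIntegral.integral_comp_sub_mul _ (inv_ne_zero hr), inv_mul_cancel_left₀ hr,
    integral_cos]
  simp

theorem stmt_9 (r : ℝ) (hr : 0 < r) (θ : ℝ → ℝ)
    (hθ : LipschitzWith (Real.toNNReal (1 / r)) θ) :
    ∀ s_f : ℝ, r * Metric.infDist (θ 0) upSet ≤ s_f →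
      (∫ t in (0:ℝ)..s_f, Real.sin (θ t)) ≤
        r * Real.sin (Metric.infDist (θ 0) upSet) +
          (s_f - r * Metric.infDist (θ 0) upSet) := by
  intro s_f hsf
  set δ := infDist (θ 0) upSet
  have hK : ((1 / r).toNNReal : ℝ) = r⁻¹ := by rw [coe_toNNReal _ (by positivity), one_div]
  have hsinθ : Continuous fun t ↦ sin (θ t) := continuous_sin.comp hθ.continuous
  have hturn : ∫ t in (0 : ℝ)..r * δ, sin (θ t) ≤ r * sin δ := by
    rw [← integral_cos_sub_inv_mul hr.ne']
    refine intervalIntegral.integral_mono_on (mul_nonneg hr.le infDist_nonneg)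
      (hsinθ.intervalIntegrable _ _)
      ((by fun_prop : Continuous fun t ↦ cos (δ - r⁻¹ * t)).intervalIntegrable _ _)
      fun t ht ↦ ?_
    have hKt : r⁻¹ * t ≤ δ := (inv_mul_le_iff₀ hr).2 ht.2
    rw [← hK] at hKt ⊢
    exact hθ.sin_le_cos_infDist_upSet_sub_mul ht.1 hKt
  have hstraight : ∫ t in r * δ..s_f, sin (θ t) ≤ s_f - r * δ := by
    simpa using intervalIntegral.integral_mono_on hsf (hsinθ.intervalIntegrable _ _)
      (intervalIntegrable_const (μ := MeasureTheory.volume)) fun t _ ↦ sin_le_one (θ t)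
  rw [← intervalIntegral.integral_add_adjacent_intervals (hsinθ.intervalIntegrable 0 (r * δ))
    (hsinθ.intervalIntegrable _ _)]
  linarith
end
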